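/- arXiv:2111.12439 — 4 statements merged into one kernel-verified Lean document; each statement's English description precedes it below -/
import Mathlib

section
/- Let (f_t(ε))_{ε ∈ ℕ} solve the system: f'_t(0) = (1/2)∑_{ε≥1} f_t(ε)², f'_t(ε) = -f_t(ε)² for odd ε ≥ 1, and f'_t(ε) = (1/2)f_t(ε/2)² - f_t(ε)² for even ε ≥ 2, with 0 ≤ f_0(ε) ≤ 1 for all ε. Then for every ε ≥ 1 and t ≥ 0, f_t(ε) ≤ 2/(1+t). -/
/-!
For `ε ≥ 1` the equation gives `f' ≥ -f²`, so a component starting nonnegative stays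
nonnegative. The barrier `b(t) = 2/(1+t)` solves `b' = -b²/2 = b²/2 - b²`; by strong induction
on `ε` the source term `f(ε/2)²/2` is at most `b²/2`, so `f(ε)` is a subsolution of the
equation solved by `b` and cannot cross it, starting from `f₀(ε) ≤ 1 < b(0)`.
-/

/-- Right-hand side of the modified discrete Boltzmann system:
`f'(0) = (1/2)∑_{ε≥1} f(ε)²`, `f'(ε) = -f(ε)²` for odd `ε`,
`f'(ε) = (1/2) f(ε/2)² - f(ε)²` for even `ε ≥ 2`. -/
noncomputable def mbRHS (g : ℕ → ℝ) (ε : ℕ) : ℝ :=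
  if ε = 0 then (1 / 2) * ∑' n : ℕ, (g (n + 1)) ^ 2
  else if Odd ε then -(g ε) ^ 2
  else (1 / 2) * (g (ε / 2)) ^ 2 - (g ε) ^ 2

/-- `f` solves the modified Boltzmann system on `[0, ∞)`. -/
def SolvesMBE (f : ℝ → ℕ → ℝ) : Prop :=
  ∀ t : ℝ, 0 ≤ t → ∀ ε : ℕ, HasDerivAt (fun s => f s ε) (mbRHS (f t) ε) t

open Set

theorem image_nonpos_of_deriv_right_le_mul {w w' : ℝ → ℝ} {a b K : ℝ}
    (hw : ContinuousOn w (Icc a b)) (hw' : ∀ x ∈ Ico a b, HasDerivWithinAt w (w' x) (Ici x) x)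
    (ha : w a ≤ 0) (bound : ∀ x ∈ Ico a b, 0 < w x → w' x ≤ K * w x) :
    ∀ ⦃x⦄, x ∈ Icc a b → w x ≤ 0 := by
  intro x hx
  -- compare `w` with the exponential fences `δ e^{(K+1)(y-a)}`, `δ > 0`, then let `δ → 0`
  have fence : ∀ δ > 0, w x ≤ δ * Real.exp ((K + 1) * (x - a)) := by
    intro δ hδ
    set B : ℝ → ℝ := fun y => δ * Real.exp ((K + 1) * (y - a))
    have hB : ∀ y, HasDerivAt B ((K + 1) * B y) y := fun y =>
      ((((hasDerivAt_id y).sub_const a).const_mul (K + 1)).exp.const_mul δ).congr_deriv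
        (by simp only [B, id]; ring)
    refine image_le_of_deriv_right_lt_deriv_boundary hw hw' ?_ hB ?_ hx
    · simpa [B] using ha.trans hδ.le
    · intro y hy hwB
      have hBpos : 0 < B y := by positivity
      calc w' y ≤ K * w y := bound y hy (hwB ▸ hBpos)
        _ < (K + 1) * B y := by rw [hwB]; linarith
  refine le_of_forall_pos_le_add fun η hη => ?_
  have hE := Real.exp_pos ((K + 1) * (x - a))
  simpa [div_mul_cancel₀ _ hE.ne'] using fence (η / Real.exp ((K + 1) * (x - a))) (by positivity)

theorem hasDerivAt_two_div_one_add {t : ℝ} (ht : 1 + t ≠ 0) :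
    HasDerivAt (fun s : ℝ => 2 / (1 + s)) (-(2 / (1 + t)) ^ 2 / 2) t :=
  ((hasDerivAt_const t (2 : ℝ)).div ((hasDerivAt_id' t).const_add 1) ht).congr_deriv
    (by field_simp; ring)

theorem neg_sq_le_mbRHS (g : ℕ → ℝ) {ε : ℕ} (hε : ε ≠ 0) : -g ε ^ 2 ≤ mbRHS g ε := by
  unfold mbRHS
  rw [if_neg hε]
  split_ifs
  · rfl
  · nlinarith [sq_nonneg (g (ε / 2))]

theorem mbRHS_le_of_sq_half_le (g : ℕ → ℝ) {ε : ℕ} (hε : ε ≠ 0) {B : ℝ} (hB : 0 ≤ B)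
    (hhalf : Even ε → g (ε / 2) ^ 2 ≤ B) : mbRHS g ε ≤ B / 2 - g ε ^ 2 := by
  unfold mbRHS
  rw [if_neg hε]
  split_ifs with h
  · nlinarith
  · linarith [hhalf (Nat.not_odd_iff_even.mp h)]

namespace SolvesMBE

variable {f : ℝ → ℕ → ℝ} {ε : ℕ}

theorem nonneg (hf : SolvesMBE f) (hε : ε ≠ 0) (h0 : 0 ≤ f 0 ε) {t : ℝ} (ht : 0 ≤ t) :
    0 ≤ f t ε := by
  have hw : ContinuousOn (fun s => -f s ε) (Icc 0 t) := fun x hx =>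
    (hf x hx.1 ε).neg.continuousAt.continuousWithinAt
  obtain ⟨M, hM⟩ := isCompact_Icc.bddAbove_image hw
  -- `-f` grows at rate at most `(-f)²`, which is at most `M · (-f)` where `-f > 0`
  have key := image_nonpos_of_deriv_right_le_mul (K := M) hw
    (fun x hx => (hf x hx.1 ε).neg.hasDerivWithinAt) (by simpa using h0)
    (fun x hx hpos => by
      have hle : -f x ε ≤ M := hM ⟨x, Ico_subset_Icc_self hx, rfl⟩
      nlinarith [neg_sq_le_mbRHS (f x) hε])
    ⟨ht, le_rfl⟩
  simpa using key

theorem le_two_div_one_add (hf : SolvesMBE f) (hε : ε ≠ 0) (h0 : f 0 ε ≤ 2)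
    (hhalf : Even ε → ∀ s, 0 ≤ s → f s (ε / 2) ^ 2 ≤ (2 / (1 + s)) ^ 2) {t : ℝ} (ht : 0 ≤ t) :
    f t ε ≤ 2 / (1 + t) := by
  have hd : ∀ s, 0 ≤ s → HasDerivAt (fun s => f s ε - 2 / (1 + s))
      (mbRHS (f s) ε + (2 / (1 + s)) ^ 2 / 2) s := fun s hs =>
    ((hf s hs ε).sub (hasDerivAt_two_div_one_add (by linarith))).congr_deriv (by ring)
  have key := image_nonpos_of_deriv_right_le_mul (K := 0)
    (fun x hx => (hd x hx.1).continuousAt.continuousWithinAt)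
    (fun x hx => (hd x hx.1).hasDerivWithinAt) (by norm_num [h0])
    (fun x hx hpos => by
      have hb : 0 < 2 / (1 + x) := div_pos two_pos (by linarith [hx.1])
      have hsq : (2 / (1 + x)) ^ 2 ≤ f x ε ^ 2 := pow_le_pow_left₀ hb.le (by linarith) 2
      have := mbRHS_le_of_sq_half_le (f x) hε (sq_nonneg _) fun he => hhalf he x hx.1
      linarith)
    ⟨ht, le_rfl⟩
  linarith

end SolvesMBE

/-- If `f` solves the modified Boltzmann system with initial datum in `[0,1]`
componentwise, then `f t ε ≤ 2 / (1 + t)` for all `ε ≥ 1` and `t ≥ 0`. -/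
theorem mbe_pointwise_bound (f : ℝ → ℕ → ℝ) (hf : SolvesMBE f)
    (hinit : ∀ ε : ℕ, 0 ≤ f 0 ε ∧ f 0 ε ≤ 1) :
    ∀ ε : ℕ, 1 ≤ ε → ∀ t : ℝ, 0 ≤ t → f t ε ≤ 2 / (1 + t) := by
  intro ε
  induction ε using Nat.strong_induction_on with
  | _ ε ih =>
    intro hε t ht
    refine hf.le_two_div_one_add (by omega) (by linarith [(hinit ε).2]) (fun heven s hs => ?_) ht
    have hhalf : 1 ≤ ε / 2 := by obtain ⟨k, rfl⟩ := heven; omega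
    exact pow_le_pow_left₀ (hf.nonneg (by omega) (hinit _).1 hs)
      (ih _ (by omega) hhalf s hs) 2
end

section
/- Let f_t : ℕ → [0,∞) satisfy ∑_{ε≥0} ε f_t(ε) ≤ e and f_t(ε) ≤ 2/(1+t) for ε ≥ 1. Then ∑_{ε≥1} f_t(ε) log ε ≤ c (1 + log(1+t))/√(1+t) for a constant c = c(e) independent of t. -/
/-!
Split the sum at a level `N ≍ √(1+t)`. Below the level, `f t ε ≤ 2/(1+t)` and `log ε ≤ log N`
give at most `N · 2/(1+t) · log N`. Above it, `log x / x` is decreasing on `[exp 1, ∞)`, so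
`log ε ≤ ε · log N / N`, and the energy bound gives at most `e · log N / N`. Both terms are
`O((1 + log(1+t)) / √(1+t))`.
-/

open Real

theorem Real.log_le_mul_log_div_of_exp_one_le {h x : ℝ} (hh : exp 1 ≤ h) (hx : h ≤ x) :
    log x ≤ x * (log h / h) := by
  have hx0 : 0 < x := (exp_pos 1).trans_le (hh.trans hx)
  exact (div_le_iff₀' hx0).mp (log_div_self_antitoneOn hh (hh.trans hx) hx)

theorem tsum_mul_log_succ_le {a : ℕ → ℝ} {M : ℝ} (ha : ∀ n, 0 ≤ a n)
    (haM : ∀ n, 1 ≤ n → a n ≤ M) (hsum : Summable fun n : ℕ => (n : ℝ) * a n)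
    {N : ℕ} (hN : exp 1 ≤ N) :
    ∑' n : ℕ, a (n + 1) * log (n + 1) ≤
      N * M * log N + (∑' n : ℕ, n * a n) * (log N / N) := by
  set head : ℕ → ℝ := fun n => if n < N then M * log N else 0
  set tail : ℕ → ℝ := fun n => ((n + 1 : ℕ) : ℝ) * a (n + 1) * (log N / N)
  have hhead_zero : ∀ n ∉ Finset.range N, head n = 0 := fun n hn => by
    simp [head, Finset.mem_range.not.mp hn]
  have hhead : Summable head := summable_of_ne_finset_zero hhead_zero
  have htail : Summable tail := ((summable_nat_add_iff 1).mpr hsum).mul_right _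
  have hterm_nonneg (n : ℕ) : 0 ≤ a (n + 1) * log (n + 1) :=
    mul_nonneg (ha _) (log_nonneg (by simp))
  have hle (n : ℕ) : a (n + 1) * log (n + 1) ≤ head n + tail n := by
    by_cases hn : n < N
    · have hlog : log (n + 1) ≤ log N := log_le_log (by positivity) (by exact_mod_cast hn)
      have : a (n + 1) * log (n + 1) ≤ M * log N :=
        mul_le_mul (haM _ n.succ_pos) hlog (log_nonneg (by simp)) ((ha _).trans (haM _ n.succ_pos))
      have htail_nonneg : 0 ≤ tail n := by have := ha (n + 1); positivity
      simp only [head, if_pos hn]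
      linarith
    · have hlog : log (n + 1) ≤ (n + 1) * (log N / N) :=
        log_le_mul_log_div_of_exp_one_le hN (by exact_mod_cast (not_lt.mp hn).trans n.le_succ)
      calc a (n + 1) * log (n + 1) ≤ a (n + 1) * ((n + 1) * (log N / N)) :=
            mul_le_mul_of_nonneg_left hlog (ha _)
        _ = head n + tail n := by simp only [head, tail, if_neg hn, Nat.cast_succ]; ring
  have htsum_head : ∑' n, head n = N * M * log N := by
    rw [tsum_eq_sum hhead_zero, Finset.sum_ite_of_true fun n hn => Finset.mem_range.mp hn,
      Finset.sum_const, Finset.card_range, nsmul_eq_mul, mul_assoc]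
  have htsum_tail : ∑' n, tail n = (∑' n : ℕ, n * a n) * (log N / N) := by
    rw [tsum_mul_right, hsum.tsum_eq_zero_add]
    simp
  calc ∑' n : ℕ, a (n + 1) * log (n + 1) ≤ ∑' n, (head n + tail n) :=
        (Summable.of_nonneg_of_le hterm_nonneg hle (hhead.add htail)).tsum_le_tsum hle
          (hhead.add htail)
    _ = _ := by rw [hhead.tsum_add htail, htsum_head, htsum_tail]

theorem exists_nat_exp_one_le_and_le_four_mul {s : ℝ} (hs : 1 ≤ s) :
    ∃ N : ℕ, exp 1 ≤ N ∧ s ≤ N ∧ (N : ℝ) ≤ 4 * s := by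
  refine ⟨⌈s⌉₊ + 2, ?_, ?_, ?_⟩ <;> push_cast
  · linarith [hs.trans (Nat.le_ceil s), exp_one_lt_d9]
  · linarith [Nat.le_ceil s]
  · linarith [Nat.ceil_lt_add_one (zero_le_one.trans hs)]

/-- Logarithmic moment bound: if `f t` is nonnegative with energy
`∑ ε ε·f t ε ≤ e` and `f t ε ≤ 2/(1+t)` for `ε ≥ 1`, then
`∑_{ε≥1} f t ε · log ε ≤ c(1 + log(1+t)) / √(1+t)` with `c = c(e)`. -/
theorem log_moment_bound (e : ℝ) (he : 0 ≤ e) :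
    ∃ c : ℝ, 0 < c ∧ ∀ f : ℝ → ℕ → ℝ,
      (∀ t : ℝ, 0 ≤ t → ∀ ε : ℕ, 0 ≤ f t ε) →
      (∀ t : ℝ, 0 ≤ t → Summable (fun ε : ℕ => (ε : ℝ) * f t ε)) →
      (∀ t : ℝ, 0 ≤ t → ∑' ε : ℕ, (ε : ℝ) * f t ε ≤ e) →
      (∀ t : ℝ, 0 ≤ t → ∀ ε : ℕ, 1 ≤ ε → f t ε ≤ 2 / (1 + t)) →
      ∀ t : ℝ, 0 ≤ t →
        ∑' n : ℕ, f t (n + 1) * Real.log (n + 1) ≤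
          c * (1 + Real.log (1 + t)) / Real.sqrt (1 + t) := by
  refine ⟨24 + 3 * e, by positivity, fun f hpos hsum hmom hbd t ht => ?_⟩
  set s := √(1 + t)
  set L := log (1 + t)
  have hs : 1 ≤ s := one_le_sqrt.mpr (by linarith)
  have hL : 0 ≤ L := log_nonneg (by linarith)
  have hss : 2 / (1 + t) = 2 / s ^ 2 := by rw [sq_sqrt (by linarith)]
  obtain ⟨N, hNe, hsN, hN4⟩ := exists_nat_exp_one_le_and_le_four_mul hs
  have hlogN : log N ≤ 3 * (1 + L) := by
    calc log N ≤ log (4 * s) := log_le_log (by linarith [exp_pos 1]) hN4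
      _ = log 4 + L / 2 := by rw [log_mul (by norm_num) (by positivity), log_sqrt (by linarith)]
      _ ≤ 3 * (1 + L) := by linarith [log_le_sub_one_of_pos (four_pos : (0 : ℝ) < 4)]
  calc ∑' n : ℕ, f t (n + 1) * log (n + 1)
      ≤ N * (2 / (1 + t)) * log N + (∑' n : ℕ, n * f t n) * (log N / N) :=
        tsum_mul_log_succ_le (hpos t ht) (hbd t ht) (hsum t ht) hNe
    _ ≤ 4 * s * (2 / s ^ 2) * (3 * (1 + L)) + e * (3 * (1 + L) / s) := by
        rw [hss]
        gcongr
        exact hmom t ht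
    _ = (24 + 3 * e) * (1 + L) / s := by field_simp; ring
end

section
/- Let B be a collision kernel on ℕ⁴ with K := sup_{ε,ε*} ∑_{ε',ε'*} B(ε,ε*,ε',ε'*) < ∞. Then the discrete homogeneous Boltzmann equation ∂_t f_t(ε) = ∑_{ε*,ε',ε'*} B[f_t(ε')f_t(ε'*) − f_t(ε)f_t(ε*)] (with B symmetric in collisions, B(ε,ε*,ε',ε'*) = B(ε',ε'*,ε,ε*)) has at most one solution in C([0,T]; ℓ¹(ℕ)) with a given probability initial datum, without assuming energy conservation. -/
/-!
The collision operator is locally Lipschitz in `ℓ¹`, with constant `4K` on probability vectors: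
write `F F - G G = (F - G) G + F (F - G)` and bound the gain and loss terms by the row sums of
`B`, the gain term after the symmetry of `B` exchanges pre- and post-collisional pairs. A mean
value inequality in `ℓ¹` then gives `sup ‖f - g‖₁ ≤ 4K (b - a) sup ‖f - g‖₁` over any `[a, b]`
at whose left end `f` and `g` agree, so they agree on intervals of length `< 1 / (4K)`, and
stepping through `[0, T]` finishes.
-/

/-- The collision operator associated to a kernel `B`. -/
noncomputable def collOp (B : ℕ → ℕ → ℕ → ℕ → ℝ) (g : ℕ → ℝ) (ε : ℕ) : ℝ :=
  ∑' q : ℕ × ℕ × ℕ, B ε q.1 q.2.1 q.2.2 * (g q.2.1 * g q.2.2 - g ε * g q.1)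

open scoped ENNReal

open Set

theorem tsum_enorm_eq_ofReal_tsum {β : Type*} {F : β → ℝ} (h0 : ∀ x, 0 ≤ F x)
    (hF : Summable F) : ∑' x, ‖F x‖ₑ = ENNReal.ofReal (∑' x, F x) := by
  rw [ENNReal.ofReal_tsum_of_nonneg h0 hF]
  exact tsum_congr fun x => Real.enorm_of_nonneg (h0 x)

theorem tsum_enorm_eq_one {β : Type*} {F : β → ℝ} (h0 : ∀ x, 0 ≤ F x) (h1 : ∑' x, F x = 1) :
    ∑' x, ‖F x‖ₑ = 1 := by
  have hF : Summable F := by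
    by_contra h
    rw [tsum_eq_zero_of_not_summable h] at h1
    exact zero_ne_one h1
  rw [tsum_enorm_eq_ofReal_tsum h0 hF, h1, ENNReal.ofReal_one]

theorem tsum_enorm_sub_le_add {ι : Type*} (F G : ι → ℝ) :
    ∑' i, ‖F i - G i‖ₑ ≤ ∑' i, ‖F i‖ₑ + ∑' i, ‖G i‖ₑ :=
  (ENNReal.tsum_le_tsum fun _ => enorm_sub_le).trans_eq ENNReal.tsum_add

theorem tsum_enorm_sub_le_of_hasDerivAt {ι : Type*} {u u' : ℝ → ι → ℝ} {a b : ℝ} {C : ℝ≥0∞}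
    (hab : a ≤ b) (hu : ∀ s ∈ Icc a b, ∀ i, HasDerivAt (fun s => u s i) (u' s i) s)
    (hC : ∀ s ∈ Icc a b, ∑' i, ‖u' s i‖ₑ ≤ C) :
    ∑' i, ‖u b i - u a i‖ₑ ≤ C * ENNReal.ofReal (b - a) := by
  rcases eq_or_ne C ⊤ with rfl | hCtop
  · rcases hab.eq_or_lt with rfl | hlt
    · simp
    · rw [ENNReal.top_mul (ENNReal.ofReal_pos.2 (sub_pos.2 hlt)).ne']
      exact le_top
  rw [ENNReal.tsum_eq_iSup_sum]
  refine iSup_le fun S => ?_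
  -- Testing against the signs of `u b - u a` turns the `ℓ¹` norm on `S` into a linear functional.
  let σ i : ℝ := SignType.sign (u b i - u a i)
  have hσ : ∀ i, ‖σ i‖ ≤ 1 := fun i => by
    simp only [σ]; cases SignType.sign (u b i - u a i) <;> simp
  have hφ : ∀ s ∈ Icc a b, HasDerivWithinAt (fun s => ∑ i ∈ S, σ i * u s i)
      (∑ i ∈ S, σ i * u' s i) (Icc a b) s := fun s hs =>
    (HasDerivAt.fun_sum fun i _ => (hu s hs i).const_mul (σ i)).hasDerivWithinAt
  have hφ' : ∀ s ∈ Ico a b, ‖∑ i ∈ S, σ i * u' s i‖ ≤ C.toReal := fun s hs => by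
    refine (norm_sum_le_of_le S fun i _ => (norm_mul_le _ _).trans
      (mul_le_of_le_one_left (norm_nonneg _) (hσ i))).trans ?_
    rw [← ENNReal.ofReal_le_iff_le_toReal hCtop,
      ENNReal.ofReal_sum_of_nonneg fun _ _ => norm_nonneg _]
    simp_rw [ofReal_norm]
    exact (ENNReal.sum_le_tsum S).trans (hC s (Ico_subset_Icc_self hs))
  have hmv := norm_image_sub_le_of_norm_deriv_le_segment' hφ hφ' b ⟨hab, le_rfl⟩
  rw [← Finset.sum_sub_distrib] at hmv
  simp_rw [← mul_sub, σ, sign_mul_self, Real.norm_eq_abs,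
    abs_of_nonneg (Finset.sum_nonneg fun i _ => abs_nonneg (u b i - u a i))] at hmv
  calc ∑ i ∈ S, ‖u b i - u a i‖ₑ = ENNReal.ofReal (∑ i ∈ S, |u b i - u a i|) := by
        rw [ENNReal.ofReal_sum_of_nonneg fun _ _ => abs_nonneg _]
        simp_rw [← Real.norm_eq_abs, ofReal_norm]
    _ ≤ ENNReal.ofReal (C.toReal * (b - a)) := ENNReal.ofReal_le_ofReal hmv
    _ = C * ENNReal.ofReal (b - a) := by
        rw [ENNReal.ofReal_mul ENNReal.toReal_nonneg, ENNReal.ofReal_toReal hCtop]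

section L1Uniqueness

variable {ι : Type*} {Q : (ι → ℝ) → ι → ℝ} {P : Set (ι → ℝ)} {L R : ℝ≥0∞} {u v : ℝ → ι → ℝ}
  {a b : ℝ}

theorem l1_ODE_solution_unique_of_mul_lt_one
    (hQ : ∀ F ∈ P, ∀ G ∈ P, ∑' i, ‖Q F i - Q G i‖ₑ ≤ L * ∑' i, ‖F i - G i‖ₑ)
    (hR : ∀ F ∈ P, ∀ G ∈ P, ∑' i, ‖F i - G i‖ₑ ≤ R) (hRtop : R ≠ ⊤)
    (hL : L * ENNReal.ofReal (b - a) < 1)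
    (hu : ∀ t ∈ Icc a b, u t ∈ P) (hv : ∀ t ∈ Icc a b, v t ∈ P)
    (hu' : ∀ t ∈ Icc a b, ∀ i, HasDerivAt (fun s => u s i) (Q (u t) i) t)
    (hv' : ∀ t ∈ Icc a b, ∀ i, HasDerivAt (fun s => v s i) (Q (v t) i) t)
    (ha : u a = v a) : ∀ t ∈ Icc a b, u t = v t := by
  set M := ⨆ s ∈ Icc a b, ∑' i, ‖u s i - v s i‖ₑ
  have hle : ∀ t ∈ Icc a b, ∑' i, ‖u t i - v t i‖ₑ ≤ M := fun t ht =>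
    le_iSup₂ (f := fun s (_ : s ∈ Icc a b) => ∑' i, ‖u s i - v s i‖ₑ) t ht
  have hMtop : M ≠ ⊤ :=
    ne_top_of_le_ne_top hRtop (iSup₂_le fun s hs => hR _ (hu s hs) _ (hv s hs))
  have hcontract : M ≤ L * ENNReal.ofReal (b - a) * M := iSup₂_le fun t ht => by
    have hsub : Icc a t ⊆ Icc a b := Icc_subset_Icc_right ht.2
    have hmv := tsum_enorm_sub_le_of_hasDerivAt (u := fun s i => u s i - v s i)
      (u' := fun s i => Q (u s) i - Q (v s) i) (C := L * M) ht.1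
      (fun s hs i => (hu' s (hsub hs) i).sub (hv' s (hsub hs) i))
      fun s hs => (hQ _ (hu s (hsub hs)) _ (hv s (hsub hs))).trans
        (by gcongr; exact hle s (hsub hs))
    simp only [ha, sub_self, sub_zero] at hmv
    calc _ ≤ L * M * ENNReal.ofReal (t - a) := hmv
      _ ≤ L * M * ENNReal.ofReal (b - a) := by gcongr; exact ht.2
      _ = L * ENNReal.ofReal (b - a) * M := by ring
  have hM : M = 0 := by
    by_contra hM
    exact (hcontract.trans_lt (by simpa using ENNReal.mul_lt_mul_left hM hMtop hL)).false
  intro t ht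
  funext i
  have hdist : ∑' i, ‖u t i - v t i‖ₑ = 0 := le_antisymm (hM ▸ hle t ht) zero_le
  exact sub_eq_zero.1 (enorm_eq_zero.1 (ENNReal.tsum_eq_zero.1 hdist i))

theorem l1_ODE_solution_unique
    (hQ : ∀ F ∈ P, ∀ G ∈ P, ∑' i, ‖Q F i - Q G i‖ₑ ≤ L * ∑' i, ‖F i - G i‖ₑ)
    (hLtop : L ≠ ⊤) (hR : ∀ F ∈ P, ∀ G ∈ P, ∑' i, ‖F i - G i‖ₑ ≤ R) (hRtop : R ≠ ⊤)
    (hu : ∀ t ∈ Icc a b, u t ∈ P) (hv : ∀ t ∈ Icc a b, v t ∈ P)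
    (hu' : ∀ t ∈ Icc a b, ∀ i, HasDerivAt (fun s => u s i) (Q (u t) i) t)
    (hv' : ∀ t ∈ Icc a b, ∀ i, HasDerivAt (fun s => v s i) (Q (v t) i) t)
    (ha : u a = v a) : ∀ t ∈ Icc a b, u t = v t := by
  obtain ⟨δ, hδ, hLδ⟩ := exists_pos_mul_lt one_pos L.toReal
  have hstep : ∀ n : ℕ, ∀ t ∈ Icc a b, t ≤ a + n * δ → u t = v t := by
    intro n
    induction n with
    | zero =>
      intro t ht hta
      rwa [le_antisymm (by simpa using hta) ht.1]
    | succ n ih =>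
      intro t ht htn
      rcases le_or_gt t (a + n * δ) with h | h
      · exact ih t ht h
      have hn : a + n * δ ∈ Icc a b := ⟨le_add_of_nonneg_right (by positivity), h.le.trans ht.2⟩
      have hsub : Icc (a + n * δ) t ⊆ Icc a b := Icc_subset_Icc hn.1 ht.2
      refine l1_ODE_solution_unique_of_mul_lt_one hQ hR hRtop ?_ (fun s hs => hu s (hsub hs))
        (fun s hs => hv s (hsub hs)) (fun s hs => hu' s (hsub hs))
        (fun s hs => hv' s (hsub hs)) (ih _ hn le_rfl) t ⟨h.le, le_rfl⟩
      calc L * ENNReal.ofReal (t - (a + n * δ)) ≤ ENNReal.ofReal (L.toReal * δ) := by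
            rw [ENNReal.ofReal_mul ENNReal.toReal_nonneg, ENNReal.ofReal_toReal hLtop]
            gcongr
            push_cast at htn
            linarith
        _ < 1 := ENNReal.ofReal_lt_one.2 hLδ
  obtain ⟨n, hn⟩ := exists_nat_ge ((b - a) / δ)
  intro t ht
  refine hstep n t ht (ht.2.trans ?_)
  rw [div_le_iff₀ hδ] at hn
  linarith

end L1Uniqueness

section KernelSums

variable {α : Type*} {B : α → α → α → α → ℝ≥0∞} {K : ℝ≥0∞}

theorem tsum_gain_eq_tsum_loss (hsym : ∀ a b c d, B a b c d = B c d a b) (u v : α → ℝ≥0∞) :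
    ∑' ε, ∑' q : α × α × α, B ε q.1 q.2.1 q.2.2 * (u q.2.1 * v q.2.2) =
      ∑' ε, ∑' q : α × α × α, B ε q.1 q.2.1 q.2.2 * (u ε * v q.1) := by
  let e : α × α × α × α ≃ α × α × α × α :=
    { toFun := fun ⟨ε, a, c, d⟩ => ⟨c, d, ε, a⟩
      invFun := fun ⟨c, d, ε, a⟩ => ⟨ε, a, c, d⟩
      left_inv := fun _ => rfl
      right_inv := fun _ => rfl }
  calc _ = ∑' p : α × α × α × α, B p.1 p.2.1 p.2.2.1 p.2.2.2 * (u p.2.2.1 * v p.2.2.2) :=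
        ENNReal.tsum_prod'.symm
    _ = ∑' p : α × α × α × α, B (e p).1 (e p).2.1 (e p).2.2.1 (e p).2.2.2 *
          (u (e p).2.2.1 * v (e p).2.2.2) := (e.tsum_eq _).symm
    _ = ∑' p : α × α × α × α, B p.1 p.2.1 p.2.2.1 p.2.2.2 * (u p.1 * v p.2.1) :=
        tsum_congr fun _ => by simp only [e, Equiv.coe_fn_mk, hsym]
    _ = _ := ENNReal.tsum_prod'

theorem tsum_loss_le (hrow : ∀ a b, ∑' p : α × α, B a b p.1 p.2 ≤ K) (u v : α → ℝ≥0∞) :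
    ∑' ε, ∑' q : α × α × α, B ε q.1 q.2.1 q.2.2 * (u ε * v q.1) ≤
      K * ((∑' x, u x) * ∑' x, v x) := by
  calc ∑' ε, ∑' q : α × α × α, B ε q.1 q.2.1 q.2.2 * (u ε * v q.1)
      = ∑' ε, ∑' a, (∑' p : α × α, B ε a p.1 p.2) * (u ε * v a) := by
        simp_rw [ENNReal.tsum_prod', ENNReal.tsum_mul_right]
    _ ≤ ∑' ε, ∑' a, K * (u ε * v a) := by gcongr with ε a; exact hrow ε a
    _ = K * ((∑' x, u x) * ∑' x, v x) := by
        simp_rw [ENNReal.tsum_mul_left, ENNReal.tsum_mul_right]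

theorem tsum_collision_le (hsym : ∀ a b c d, B a b c d = B c d a b)
    (hrow : ∀ a b, ∑' p : α × α, B a b p.1 p.2 ≤ K) (u v : α → ℝ≥0∞) :
    ∑' ε, ∑' q : α × α × α, B ε q.1 q.2.1 q.2.2 * (u q.2.1 * v q.2.2 + u ε * v q.1) ≤
      2 * K * ((∑' x, u x) * ∑' x, v x) := by
  simp_rw [mul_add, ENNReal.tsum_add, tsum_gain_eq_tsum_loss hsym, two_mul, add_mul]
  exact add_le_add (tsum_loss_le hrow u v) (tsum_loss_le hrow u v)

end KernelSums

theorem enorm_mul_sub_sub_mul_sub_le {R : Type*} [NormedCommRing R] [NormMulClass R]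
    (b x y z w x' y' z' w' : R) :
    ‖b * (x * y - z * w) - b * (x' * y' - z' * w')‖ₑ ≤
      ‖b‖ₑ * (‖x - x'‖ₑ * ‖y'‖ₑ + ‖z - z'‖ₑ * ‖w'‖ₑ) +
        ‖b‖ₑ * (‖x‖ₑ * ‖y - y'‖ₑ + ‖z‖ₑ * ‖w - w'‖ₑ) := by
  have split : b * (x * y - z * w) - b * (x' * y' - z' * w') =
      b * (((x - x') * y' + x * (y - y')) - ((z - z') * w' + z * (w - w'))) := by ring
  rw [split, enorm_mul, ← mul_add]
  gcongr
  calc _ ≤ (‖x - x'‖ₑ * ‖y'‖ₑ + ‖x‖ₑ * ‖y - y'‖ₑ) + (‖z - z'‖ₑ * ‖w'‖ₑ + ‖z‖ₑ * ‖w - w'‖ₑ) := by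
        refine enorm_sub_le.trans (add_le_add ?_ ?_) <;>
          exact (enorm_add_le _ _).trans_eq (by rw [enorm_mul, enorm_mul])
    _ = _ := by ring

section CollisionOperator

variable {B : ℕ → ℕ → ℕ → ℕ → ℝ} {K : ℝ≥0∞}

theorem summable_collision_integrand (hsym : ∀ a b c d, B a b c d = B c d a b)
    (hrow : ∀ a b, ∑' p : ℕ × ℕ, ‖B a b p.1 p.2‖ₑ ≤ K) (hK : K ≠ ⊤)
    {F : ℕ → ℝ} (hF : ∑' x, ‖F x‖ₑ ≠ ⊤) (ε : ℕ) :
    Summable fun q : ℕ × ℕ × ℕ => B ε q.1 q.2.1 q.2.2 * (F q.2.1 * F q.2.2 - F ε * F q.1) := by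
  have hsym' : ∀ a b c d, ‖B a b c d‖ₑ = ‖B c d a b‖ₑ := fun a b c d => by rw [hsym]
  refine Summable.of_enorm
    (ne_top_of_le_ne_top (b := 2 * K * ((∑' x, ‖F x‖ₑ) * ∑' x, ‖F x‖ₑ)) ?_ ?_)
  · exact ENNReal.mul_ne_top (ENNReal.mul_ne_top ENNReal.ofNat_ne_top hK)
      (ENNReal.mul_ne_top hF hF)
  calc _ ≤ ∑' q : ℕ × ℕ × ℕ, ‖B ε q.1 q.2.1 q.2.2‖ₑ *
        (‖F q.2.1‖ₑ * ‖F q.2.2‖ₑ + ‖F ε‖ₑ * ‖F q.1‖ₑ) := by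
        gcongr with q
        rw [enorm_mul]
        gcongr
        exact enorm_sub_le.trans_eq (by rw [enorm_mul, enorm_mul])
    _ ≤ ∑' ε, ∑' q : ℕ × ℕ × ℕ, ‖B ε q.1 q.2.1 q.2.2‖ₑ *
        (‖F q.2.1‖ₑ * ‖F q.2.2‖ₑ + ‖F ε‖ₑ * ‖F q.1‖ₑ) := ENNReal.le_tsum ε
    _ ≤ _ := tsum_collision_le hsym' hrow _ _

theorem tsum_enorm_collOp_sub_le (hsym : ∀ a b c d, B a b c d = B c d a b)
    (hrow : ∀ a b, ∑' p : ℕ × ℕ, ‖B a b p.1 p.2‖ₑ ≤ K) (hK : K ≠ ⊤)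
    {F G : ℕ → ℝ} (hF : ∑' x, ‖F x‖ₑ ≠ ⊤) (hG : ∑' x, ‖G x‖ₑ ≠ ⊤) :
    ∑' ε, ‖collOp B F ε - collOp B G ε‖ₑ ≤
      2 * K * ((∑' x, ‖F x‖ₑ + ∑' x, ‖G x‖ₑ) * ∑' x, ‖F x - G x‖ₑ) := by
  have hsym' : ∀ a b c d, ‖B a b c d‖ₑ = ‖B c d a b‖ₑ := fun a b c d => by rw [hsym]
  calc _ ≤ ∑' ε, ∑' q : ℕ × ℕ × ℕ,
        (‖B ε q.1 q.2.1 q.2.2‖ₑ * (‖F q.2.1 - G q.2.1‖ₑ * ‖G q.2.2‖ₑ +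
            ‖F ε - G ε‖ₑ * ‖G q.1‖ₑ) +
          ‖B ε q.1 q.2.1 q.2.2‖ₑ * (‖F q.2.1‖ₑ * ‖F q.2.2 - G q.2.2‖ₑ +
            ‖F ε‖ₑ * ‖F q.1 - G q.1‖ₑ)) := by
        gcongr with ε
        rw [collOp, collOp, ← (summable_collision_integrand hsym hrow hK hF ε).tsum_sub
          (summable_collision_integrand hsym hrow hK hG ε)]
        exact enorm_tsum_le_tsum_enorm.trans
          (ENNReal.tsum_le_tsum fun q => enorm_mul_sub_sub_mul_sub_le ..)
    _ ≤ 2 * K * ((∑' x, ‖F x - G x‖ₑ) * ∑' x, ‖G x‖ₑ) +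
          2 * K * ((∑' x, ‖F x‖ₑ) * ∑' x, ‖F x - G x‖ₑ) := by
        simp_rw [ENNReal.tsum_add]
        exact add_le_add (tsum_collision_le hsym' hrow _ _) (tsum_collision_le hsym' hrow _ _)
    _ = _ := by ring

end CollisionOperator

theorem boltzmann_uniqueness_general (T K : ℝ)
    (B : ℕ → ℕ → ℕ → ℕ → ℝ)
    (hB0 : ∀ a b c d, 0 ≤ B a b c d)
    (hBsym : ∀ a b c d, B a b c d = B c d a b)
    (hBsumm : ∀ a b, Summable (fun p : ℕ × ℕ => B a b p.1 p.2))
    (hK : ∀ a b, ∑' p : ℕ × ℕ, B a b p.1 p.2 ≤ K)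
    (f g : ℝ → ℕ → ℝ)
    (hfpos : ∀ t ∈ Set.Icc (0 : ℝ) T, ∀ ε, 0 ≤ f t ε)
    (hfmass : ∀ t ∈ Set.Icc (0 : ℝ) T, ∑' ε : ℕ, f t ε = 1)
    (hgpos : ∀ t ∈ Set.Icc (0 : ℝ) T, ∀ ε, 0 ≤ g t ε)
    (hgmass : ∀ t ∈ Set.Icc (0 : ℝ) T, ∑' ε : ℕ, g t ε = 1)
    (hfde : ∀ t ∈ Set.Icc (0 : ℝ) T, ∀ ε : ℕ,
      HasDerivAt (fun s => f s ε) (collOp B (f t) ε) t)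
    (hgde : ∀ t ∈ Set.Icc (0 : ℝ) T, ∀ ε : ℕ,
      HasDerivAt (fun s => g s ε) (collOp B (g t) ε) t)
    (hinit : f 0 = g 0) :
    ∀ t ∈ Set.Icc (0 : ℝ) T, f t = g t := by
  have hrow : ∀ a b, ∑' p : ℕ × ℕ, ‖B a b p.1 p.2‖ₑ ≤ ENNReal.ofReal K := fun a b =>
    (tsum_enorm_eq_ofReal_tsum (fun p : ℕ × ℕ => hB0 a b p.1 p.2) (hBsumm a b)).trans_le
      (ENNReal.ofReal_le_ofReal (hK a b))
  let P : Set (ℕ → ℝ) := {F | (∀ x, 0 ≤ F x) ∧ ∑' x, F x = 1}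
  have hP : ∀ F ∈ P, ∑' x, ‖F x‖ₑ = 1 := fun F hF => tsum_enorm_eq_one hF.1 hF.2
  refine l1_ODE_solution_unique (P := P) (L := 4 * ENNReal.ofReal K) (R := 2) ?_ (by finiteness)
    ?_ (by simp) (fun t ht => ⟨hfpos t ht, hfmass t ht⟩) (fun t ht => ⟨hgpos t ht, hgmass t ht⟩)
    hfde hgde hinit
  · intro F hF G hG
    refine (tsum_enorm_collOp_sub_le hBsym hrow ENNReal.ofReal_ne_top
      ((hP F hF).trans_ne ENNReal.one_ne_top) ((hP G hG).trans_ne ENNReal.one_ne_top)).trans_eq ?_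
    rw [hP F hF, hP G hG]
    ring
  · intro F hF G hG
    exact (tsum_enorm_sub_le_add F G).trans_eq (by rw [hP F hF, hP G hG, one_add_one_eq_two])

/-- Uniqueness for the discrete homogeneous Boltzmann equation with a kernel
having bounded row sums: two probability-valued solutions on `[0,T]` with the
same initial datum coincide (no energy conservation assumed). -/
theorem boltzmann_uniqueness (T K : ℝ) (hT : 0 < T)
    (B : ℕ → ℕ → ℕ → ℕ → ℝ)
    (hB0 : ∀ a b c d, 0 ≤ B a b c d)
    (hBsym : ∀ a b c d, B a b c d = B c d a b)
    (hBsumm : ∀ a b, Summable (fun p : ℕ × ℕ => B a b p.1 p.2))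
    (hK : ∀ a b, ∑' p : ℕ × ℕ, B a b p.1 p.2 ≤ K)
    (f g : ℝ → ℕ → ℝ)
    (hfpos : ∀ t ∈ Set.Icc (0 : ℝ) T, ∀ ε, 0 ≤ f t ε)
    (hfmass : ∀ t ∈ Set.Icc (0 : ℝ) T, ∑' ε : ℕ, f t ε = 1)
    (hgpos : ∀ t ∈ Set.Icc (0 : ℝ) T, ∀ ε, 0 ≤ g t ε)
    (hgmass : ∀ t ∈ Set.Icc (0 : ℝ) T, ∑' ε : ℕ, g t ε = 1)
    (hfde : ∀ t ∈ Set.Icc (0 : ℝ) T, ∀ ε : ℕ,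
      HasDerivAt (fun s => f s ε) (collOp B (f t) ε) t)
    (hgde : ∀ t ∈ Set.Icc (0 : ℝ) T, ∀ ε : ℕ,
      HasDerivAt (fun s => g s ε) (collOp B (g t) ε) t)
    (hinit : f 0 = g 0) :
    ∀ t ∈ Set.Icc (0 : ℝ) T, f t = g t :=
  boltzmann_uniqueness_general T K B hB0 hBsym hBsumm hK f g hfpos hfmass hgpos hgmass hfde hgde
    hinit
end

section
/- For each p ∈ (0,1], the geometric distribution f(ε) = p(1−p)^ε on ℕ is a stationary solution of the discrete homogeneous Boltzmann equation with kernel B(ε,ε*,ε',ε'*) = (ε+ε*+1)^{-1}𝟙{ε+ε*=ε'+ε'*}𝟙{{ε,ε*}≠{ε',ε'*}}, i.e. ∑_{ε*,ε',ε'*} B(ε,ε*,ε',ε'*)[f(ε')f(ε'*) − f(ε)f(ε*)] = 0 for every ε. -/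
/-- The collision kernel of the discrete-energy Kac walk. -/
noncomputable def Bker (ε εs ε' εs' : ℕ) : ℝ :=
  if ε + εs = ε' + εs' ∧ ({ε, εs} : Multiset ℕ) ≠ ({ε', εs'} : Multiset ℕ) then
    1 / ((ε + εs + 1 : ℕ) : ℝ)
  else 0

/-- The geometric distributions `f(ε) = p(1-p)^ε` are stationary solutions of
the discrete homogeneous Boltzmann equation. -/
theorem geometric_stationary (p : ℝ) (hp : 0 < p) (hp1 : p ≤ 1) :
    ∀ ε : ℕ,
      ∑' q : ℕ × ℕ × ℕ,
        Bker ε q.1 q.2.1 q.2.2 *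
          ((p * (1 - p) ^ q.2.1) * (p * (1 - p) ^ q.2.2) -
            (p * (1 - p) ^ ε) * (p * (1 - p) ^ q.1)) = 0 := by
  intro ε
  have h0 : ∀ q : ℕ × ℕ × ℕ,
      Bker ε q.1 q.2.1 q.2.2 *
        ((p * (1 - p) ^ q.2.1) * (p * (1 - p) ^ q.2.2) -
          (p * (1 - p) ^ ε) * (p * (1 - p) ^ q.1)) = 0 := by
    rintro ⟨εs, ε', εs'⟩
    by_cases h : ε + εs = ε' + εs' ∧ ({ε, εs} : Multiset ℕ) ≠ ({ε', εs'} : Multiset ℕ)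
    · have key : (p * (1 - p) ^ ε') * (p * (1 - p) ^ εs')
          = (p * (1 - p) ^ ε) * (p * (1 - p) ^ εs) := by
        rw [mul_mul_mul_comm, mul_mul_mul_comm p _ p, ← pow_add, ← pow_add, ← h.1]
      simp [key]
    · rw [Bker, if_neg h, zero_mul]
  rw [tsum_congr h0]
  exact tsum_zero
end
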